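/- For every integer L ≥ 1, every integer i ≥ 0 and every t ∈ [0, 1/(2L²)], the i-th iterated derivative of g_L satisfies |g_L^{(i)}(t)| ≤ (3·i·L^{3/2})^i, where the right-hand side is interpreted as 1 when i = 0. -/

import Mathlib

/-!
Write `g_L(t) = P(t²)` with `P = ∏ (1 - c² X)^⌊L/c⌋`. Coefficientwise domination by the power
series of `exp (S x)` is multiplicative in `S` and `1 - r X` is dominated by `exp (r x)`, so the
`k`-th coefficient of `P` is at most `S^k / k!` in absolute value, where
`S = ∑ ⌊L/c⌋ c² ≤ L³ = (L^{3/2})²`. Differentiating `∑ p_k t^{2k}` termwise `i` times, the `k`-th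
term is bounded using `(2k)^i ≤ (3i/2)^i e^{4k/3 - i}` (from `u ≤ e^{u-1}`) and `L^{3/2} t ≤ 1/2`,
which leaves `(3 i L^{3/2})^i e^{-i} exp (e^{4/3}/4)`; this is at most `(3 i L^{3/2})^i` when
`i ≥ 1` because `e^{4/3} ≤ 4`. For `i = 0` every factor `1 - c² t²` of `g_L(t)` lies in `[0, 1]`.
-/

/-- The polynomial function `g_L(t) = ∏_{c=1}^{L} (1 - c² t²)^⌊L/c⌋`. -/
noncomputable def gL (L : ℕ) (t : ℝ) : ℝ :=
  ∏ c ∈ Finset.Icc 1 L, (1 - (c : ℝ) ^ 2 * t ^ 2) ^ (L / c)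

open Polynomial Finset Real
open scoped Nat

def CoeffsBoundedByExp (S : ℝ) (p : ℝ[X]) : Prop :=
  ∀ k, |p.coeff k| ≤ S ^ k / k !

theorem add_pow_div_factorial {K : Type*} [Field K] [CharZero K] (a b : K) (n : ℕ) :
    (a + b) ^ n / n ! = ∑ m ∈ antidiagonal n, a ^ m.1 / m.1 ! * (b ^ m.2 / m.2 !) := by
  rw [(Commute.all a b).add_pow', sum_div]
  refine sum_congr rfl fun m hm => ?_
  rw [HasAntidiagonal.mem_antidiagonal] at hm
  subst hm
  have hchoose : ((m.1 + m.2).choose m.2 : K) ≠ 0 :=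
    Nat.cast_ne_zero.mpr (Nat.choose_pos (Nat.le_add_left _ _)).ne'
  rw [nsmul_eq_mul, Nat.choose_symm_add, ← Nat.add_choose_mul_factorial_mul_factorial m.1 m.2]
  push_cast
  field_simp

namespace CoeffsBoundedByExp

variable {S T : ℝ} {p q : ℝ[X]}

theorem nonneg (hp : CoeffsBoundedByExp S p) : 0 ≤ S := by
  simpa using (abs_nonneg _).trans (hp 1)

theorem mono (hp : CoeffsBoundedByExp S p) (hST : S ≤ T) : CoeffsBoundedByExp T p := fun k =>
  (hp k).trans (by gcongr; exact hp.nonneg)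

theorem one : CoeffsBoundedByExp 0 1 := by
  intro k
  rcases k with _ | k <;> simp [coeff_one]

theorem mul (hp : CoeffsBoundedByExp S p) (hq : CoeffsBoundedByExp T q) :
    CoeffsBoundedByExp (S + T) (p * q) := by
  intro n
  rw [coeff_mul, add_pow_div_factorial]
  refine (abs_sum_le_sum_abs _ _).trans (sum_le_sum fun m _ => ?_)
  rw [abs_mul]
  exact mul_le_mul (hp _) (hq _) (abs_nonneg _) ((abs_nonneg _).trans (hp _))

theorem pow (hp : CoeffsBoundedByExp S p) (n : ℕ) : CoeffsBoundedByExp (n * S) (p ^ n) := by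
  induction n with
  | zero => simpa using one
  | succ n ih => simpa [pow_succ, add_mul] using ih.mul hp

theorem prod {ι : Type*} (s : Finset ι) {S : ι → ℝ} {p : ι → ℝ[X]}
    (hp : ∀ c ∈ s, CoeffsBoundedByExp (S c) (p c)) :
    CoeffsBoundedByExp (∑ c ∈ s, S c) (∏ c ∈ s, p c) := by
  classical
  induction s using Finset.induction_on with
  | empty => simpa using one
  | insert a s ha ih =>
    rw [prod_insert ha, sum_insert ha]
    exact (hp a (mem_insert_self a s)).mul (ih fun c hc => hp c (mem_insert_of_mem hc))

end CoeffsBoundedByExp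

theorem coeffsBoundedByExp_one_sub_C_mul_X {r : ℝ} (hr : 0 ≤ r) :
    CoeffsBoundedByExp r (1 - C r * X) := by
  intro k
  rcases k with _ | _ | k
  · simp
  · simp [coeff_one, abs_of_nonneg hr]
  · have hcoeff : (1 - C r * X).coeff (k + 2) = 0 := by simp [coeff_one]
    rw [hcoeff, abs_zero]
    positivity

theorem pow_le_mul_pow_mul_exp {x a : ℝ} (hx : 0 ≤ x) (ha : 0 < a) (n : ℕ) :
    x ^ n ≤ (n * a) ^ n * exp (x / a - n) := by
  rcases n.eq_zero_or_pos with rfl | hn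
  · simpa using (div_nonneg hx ha.le)
  have hna : 0 < (n : ℝ) * a := by positivity
  set u := x / (n * a)
  have hx_eq : x = n * a * u := (mul_div_cancel₀ x hna.ne').symm
  calc x ^ n = (n * a) ^ n * u ^ n := by rw [hx_eq, mul_pow]
    _ ≤ (n * a) ^ n * exp (u - 1) ^ n := by
        gcongr
        linarith [add_one_le_exp (u - 1)]
    _ = (n * a) ^ n * exp (x / a - n) := by
        rw [← exp_nat_mul, hx_eq]
        congr 2
        field_simp

theorem exp_four_thirds_le_four : exp (4 / 3) ≤ 4 := by
  rw [← le_log_iff_exp_le (by norm_num),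
    show log 4 = 2 * log 2 by rw [← log_rpow two_pos]; norm_num]
  linarith [log_two_gt_d9]

theorem Polynomial.iteratedDeriv_eval (p : ℝ[X]) (i : ℕ) :
    iteratedDeriv i (fun x => p.eval x) = fun x => (derivative^[i] p).eval x := by
  induction i with
  | zero => simp
  | succ i ih =>
    ext x
    rw [iteratedDeriv_succ, ih, Function.iterate_succ_apply']
    exact Polynomial.deriv _

theorem Polynomial.eval_iterate_derivative_expand_two {R : Type*} [CommSemiring R]
    (p : R[X]) (i : ℕ) (t : R) :
    (derivative^[i] (expand R 2 p)).eval t =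
      p.sum fun k a => a * (2 * k).descFactorial i * t ^ (2 * k - i) := by
  simp only [expand_eq_sum, Polynomial.sum, iterate_derivative_sum, iterate_derivative_C_mul,
    ← pow_mul, iterate_derivative_X_pow_eq_smul, eval_finsetSum, eval_mul, eval_C, eval_smul,
    eval_pow, eval_X]
  refine sum_congr rfl fun k _ => ?_
  ring

theorem descFactorial_mul_pow_le {s t : ℝ} (hs : 0 ≤ s) (ht : 0 ≤ t) (hst : s * t ≤ 1 / 2)
    (i k : ℕ) :
    (2 * k).descFactorial i * ((s ^ 2) ^ k / k !) * t ^ (2 * k - i) ≤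
      (3 * i * s) ^ i * exp (-i) * ((exp (4 / 3) / 4) ^ k / k !) := by
  rcases lt_or_ge (2 * k) i with hlt | hle
  · rw [Nat.descFactorial_eq_zero_iff_lt.mpr hlt]
    simp only [Nat.cast_zero, zero_mul]
    positivity
  obtain ⟨m, hm⟩ := Nat.exists_eq_add_of_le hle
  have hdesc : ((2 * k).descFactorial i : ℝ) ≤ (3 / 2 * i) ^ i * exp (4 / 3) ^ k * exp (-i) := by
    calc ((2 * k).descFactorial i : ℝ) ≤ ((2 * k : ℕ) : ℝ) ^ i := by
          exact_mod_cast Nat.descFactorial_le_pow _ _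
      _ ≤ (i * (3 / 2)) ^ i * exp ((2 * k : ℕ) / (3 / 2) - i) :=
          pow_le_mul_pow_mul_exp (by positivity) (by norm_num) i
      _ = (3 / 2 * i) ^ i * exp (4 / 3) ^ k * exp (-i) := by
          rw [← exp_nat_mul, mul_assoc, ← exp_add]
          push_cast
          ring_nf
  have hst' : (s * t) ^ m ≤ 1 / 2 ^ m := by
    simpa [div_pow] using pow_le_pow_left₀ (by positivity) hst m
  have hk : (4 : ℝ) ^ k = 2 ^ i * 2 ^ m := by
    rw [← pow_add, ← hm, pow_mul]
    norm_num
  calc (2 * k).descFactorial i * ((s ^ 2) ^ k / k !) * t ^ (2 * k - i)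
      = (2 * k).descFactorial i * s ^ i * (s * t) ^ m / k ! := by
        rw [← pow_mul, hm, Nat.add_sub_cancel_left, mul_pow, pow_add]
        ring
    _ ≤ (3 / 2 * i) ^ i * exp (4 / 3) ^ k * exp (-i) * s ^ i * (1 / 2 ^ m) / k ! := by
        gcongr
    _ = (3 * i * s) ^ i * exp (-i) * ((exp (4 / 3) / 4) ^ k / k !) := by
        rw [div_pow, hk]
        simp only [mul_pow, div_pow]
        field_simp

theorem abs_eval_iterate_derivative_expand_two_le {p : ℝ[X]} {s t : ℝ} (hs : 0 ≤ s)
    (hp : CoeffsBoundedByExp (s ^ 2) p) (hst : s * |t| ≤ 1 / 2) {i : ℕ} (hi : 1 ≤ i) :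
    |(derivative^[i] (expand ℝ 2 p)).eval t| ≤ (3 * i * s) ^ i := by
  set y := exp (4 / 3) / 4
  have hy : y ≤ i :=
    (div_le_one_of_le₀ exp_four_thirds_le_four (by norm_num)).trans (by exact_mod_cast hi)
  rw [eval_iterate_derivative_expand_two, Polynomial.sum]
  calc |∑ k ∈ p.support, p.coeff k * (2 * k).descFactorial i * t ^ (2 * k - i)|
      ≤ ∑ k ∈ p.support, (2 * k).descFactorial i * ((s ^ 2) ^ k / k !) * |t| ^ (2 * k - i) := by
        refine (abs_sum_le_sum_abs _ _).trans (sum_le_sum fun k _ => ?_)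
        rw [abs_mul, abs_mul, abs_pow, Nat.abs_cast, mul_comm |p.coeff k|]
        gcongr
        exact hp k
    _ ≤ ∑ k ∈ range (p.natDegree + 1), (3 * i * s) ^ i * exp (-i) * (y ^ k / k !) := by
        refine (sum_le_sum fun k _ => descFactorial_mul_pow_le hs (abs_nonneg t) hst i k).trans ?_
        exact sum_le_sum_of_subset_of_nonneg supp_subset_range_natDegree_succ
          fun _ _ _ => by positivity
    _ ≤ (3 * i * s) ^ i * exp (-i) * exp y := by
        rw [← mul_sum]
        gcongr
        exact sum_le_exp_of_nonneg (by positivity) _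
    _ ≤ (3 * i * s) ^ i := by
        rw [mul_assoc, ← exp_add]
        exact mul_le_of_le_one_right (by positivity) (exp_le_one_iff.mpr (by linarith))

noncomputable def gLPoly (L : ℕ) : ℝ[X] :=
  ∏ c ∈ Icc 1 L, (1 - C ((c : ℝ) ^ 2) * X) ^ (L / c)

theorem gL_eq_eval_expand (L : ℕ) : gL L = fun t => (expand ℝ 2 (gLPoly L)).eval t := by
  ext t
  simp [gL, gLPoly, eval_prod]

theorem sum_div_mul_sq_le_cube (L : ℕ) : ∑ c ∈ Icc 1 L, L / c * c ^ 2 ≤ L ^ 3 :=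
  calc ∑ c ∈ Icc 1 L, L / c * c ^ 2 ≤ ∑ c ∈ Icc 1 L, L * L := by
        refine sum_le_sum fun c hc => ?_
        rw [sq, ← mul_assoc]
        exact Nat.mul_le_mul (Nat.div_mul_le_self L c) (mem_Icc.mp hc).2
    _ = L ^ 3 := by rw [sum_const, Nat.card_Icc, Nat.add_sub_cancel, smul_eq_mul]; ring

theorem coeffsBoundedByExp_gLPoly (L : ℕ) : CoeffsBoundedByExp (L ^ 3) (gLPoly L) := by
  refine (CoeffsBoundedByExp.prod _ fun c _ =>
    (coeffsBoundedByExp_one_sub_C_mul_X (by positivity)).pow (L / c)).mono ?_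
  exact_mod_cast sum_div_mul_sq_le_cube L

theorem abs_gL_le_one {L : ℕ} {t : ℝ} (ht : (L : ℝ) ^ 2 * t ^ 2 ≤ 2) : |gL L t| ≤ 1 := by
  rw [gL, abs_prod]
  refine prod_le_one (fun _ _ => abs_nonneg _) fun c hc => ?_
  have hcL : (c : ℝ) ≤ L := by exact_mod_cast (mem_Icc.mp hc).2
  have hct : (c : ℝ) ^ 2 * t ^ 2 ≤ 2 := ht.trans' (by gcongr)
  rw [abs_pow]
  exact pow_le_one₀ (abs_nonneg _)
    (abs_le.mpr ⟨by linarith, by nlinarith [sq_nonneg ((c : ℝ) * t)]⟩)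

theorem natCast_rpow_three_halves_le_sq (n : ℕ) : (n : ℝ) ^ ((3 : ℝ) / 2) ≤ n ^ 2 := by
  rcases n.eq_zero_or_pos with rfl | hn
  · simp
  · calc (n : ℝ) ^ ((3 : ℝ) / 2) ≤ n ^ (2 : ℝ) :=
          rpow_le_rpow_of_exponent_le (by exact_mod_cast hn) (by norm_num)
      _ = n ^ 2 := rpow_two _

theorem stmt6_general (L : ℕ) (i : ℕ) :
    ∀ t ∈ Set.Icc (0 : ℝ) (1 / (2 * (L : ℝ) ^ 2)),
      |iteratedDeriv i (gL L) t| ≤ (3 * (i : ℝ) * (L : ℝ) ^ ((3 : ℝ) / 2)) ^ i := by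
  rintro t ⟨ht0, htL⟩
  have hLt : (L : ℝ) ^ 2 * t ≤ 1 / 2 :=
    calc (L : ℝ) ^ 2 * t ≤ (L : ℝ) ^ 2 * (1 / (2 * (L : ℝ) ^ 2)) := by gcongr
      _ = (L : ℝ) ^ 2 / (L : ℝ) ^ 2 / 2 := by ring
      _ ≤ 1 / 2 := by gcongr; exact div_self_le_one _
  rcases i.eq_zero_or_pos with rfl | hi
  · have hLt' : (L : ℝ) * t ≤ 1 / 2 :=
      hLt.trans' (by gcongr; exact_mod_cast Nat.le_self_pow two_ne_zero L)
    simpa using abs_gL_le_one (L := L) (t := t) (by nlinarith [mul_nonneg (Nat.cast_nonneg L) ht0])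
  rw [gL_eq_eval_expand, iteratedDeriv_eval]
  refine abs_eval_iterate_derivative_expand_two_le (by positivity) ?_ ?_ hi
  · rw [← rpow_natCast, ← rpow_mul (by positivity),
      show (3 / 2 * (2 : ℕ) : ℝ) = (3 : ℕ) by norm_num, rpow_natCast]
    exact_mod_cast coeffsBoundedByExp_gLPoly L
  · rw [abs_of_nonneg ht0]
    exact hLt.trans' (by gcongr; exact natCast_rpow_three_halves_le_sq L)

/-- For every `L ≥ 1`, `i ≥ 0` and `t ∈ [0, 1/(2L²)]`,
`|g_L^{(i)}(t)| ≤ (3 i L^{3/2})^i`. -/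
theorem stmt6 (L : ℕ) (hL : 1 ≤ L) (i : ℕ) :
    ∀ t ∈ Set.Icc (0 : ℝ) (1 / (2 * (L : ℝ) ^ 2)),
      |iteratedDeriv i (gL L) t| ≤ (3 * (i : ℝ) * (L : ℝ) ^ ((3 : ℝ) / 2)) ^ i :=
  stmt6_general L i
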